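/- The only elements of the ring Z[1/√2, i] with absolute value 1 are the powers ω^k of the eighth root of unity ω = e^{iπ/4}. -/

import Mathlib

noncomputable section

open Complex

/-- The eighth root of unity ω = e^{iπ/4}. -/
def omg : ℂ := Complex.exp (Real.pi * Complex.I / 4)

/-- √2 as a complex number. -/
def rt2 : ℂ := (Real.sqrt 2 : ℝ)

/-- Membership in the ring Z[ω] = {a + bω + cω² + dω³ : a,b,c,d ∈ ℤ}. -/
def Zomega (z : ℂ) : Prop :=
  ∃ a b c d : ℤ, z = a + b * omg + c * omg ^ 2 + d * omg ^ 3

/-- Membership in the ring Z[1/√2, i] = {u/(√2)^n : u ∈ Z[ω], n ∈ ℕ}. -/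
def ZRoot2i (z : ℂ) : Prop :=
  ∃ u : ℂ, Zomega u ∧ ∃ n : ℕ, z = u / rt2 ^ n

/-- `b` divides `z` within the ring Z[ω]. -/
def ZDvd (b z : ℂ) : Prop := ∃ q : ℂ, Zomega q ∧ z = b * q

/-- `k` is the greatest dividing exponent of base `b` with respect to `z`:
`b^k` divides `z` in Z[ω], while `b^(k+1)` does not. -/
def IsGde (b z : ℂ) (k : ℕ) : Prop := ZDvd (b ^ k) z ∧ ¬ ZDvd (b ^ (k + 1)) z

/-- `k` is the smallest denominator exponent of base √2 with respect to `z`: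
the smallest integer `k` such that `z·(√2)^k ∈ Z[ω]`. -/
def IsSde (z : ℂ) (k : ℤ) : Prop :=
  Zomega (z * rt2 ^ k) ∧ ∀ j : ℤ, Zomega (z * rt2 ^ j) → k ≤ j

/-!
Write `z = u / √2ⁿ` with `u = a + bω + cω² + dω³ ∈ ℤ[ω]`. Then
`|u|² = (a² + b² + c² + d²) + (ab + bc + cd - da)√2 = 2ⁿ`, so by the irrationality of
`√2` the cross term vanishes and `a² + b² + c² + d² = 2ⁿ`. For `n = 0` exactly one
coefficient is `±1`, so `u = ±ωʲ`. For `n > 0` the sum of squares is even and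
`(a + c)(b + d) = 2ad`, which forces `a + c` and `b + d` to be even; since `√2 = ω - ω³`,
this makes `√2` divide `u` in `ℤ[ω]`, and we descend to `n - 1`.
-/

lemma normSq_rt2 : normSq rt2 = 2 := by
  rw [rt2, normSq_ofReal, Real.mul_self_sqrt zero_le_two]

lemma rt2_ne_zero : rt2 ≠ 0 := by
  rw [← normSq_pos, normSq_rt2]
  exact zero_lt_two

lemma omg_eq : omg = (Real.sqrt 2 / 2 : ℝ) * (1 + I) := by
  rw [omg, show (Real.pi : ℂ) * I / 4 = ((Real.pi / 4 : ℝ) : ℂ) * I by push_cast; ring,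
    exp_mul_I, ← ofReal_cos, ← ofReal_sin, Real.cos_pi_div_four, Real.sin_pi_div_four]
  ring

lemma omg_sq : omg ^ 2 = I := by
  have h : ((Real.sqrt 2 : ℝ) : ℂ) ^ 2 = 2 := by
    rw [← ofReal_pow, Real.sq_sqrt zero_le_two, ofReal_ofNat]
  rw [omg_eq]
  push_cast at h ⊢
  linear_combination (1 + I) ^ 2 / 4 * h + I_sq / 2

lemma omg_pow_three : omg ^ 3 = I * omg := by
  rw [pow_succ, omg_sq]

lemma omg_pow_four : omg ^ 4 = -1 := by
  rw [show 4 = 2 * 2 from rfl, pow_mul, omg_sq, I_sq]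

lemma rt2_eq_omg_sub_omg_pow_three : rt2 = omg - omg ^ 3 := by
  rw [omg_pow_three, omg_eq, rt2]
  push_cast
  linear_combination (Real.sqrt 2 : ℂ) / 2 * I_sq

lemma normSq_zomega (a b c d : ℤ) :
    normSq (a + b * omg + c * omg ^ 2 + d * omg ^ 3) =
      (a ^ 2 + b ^ 2 + c ^ 2 + d ^ 2 : ℤ) +
        (a * b + b * c + c * d - d * a : ℤ) * Real.sqrt 2 := by
  have hsqrt : Real.sqrt 2 ^ 2 = 2 := Real.sq_sqrt zero_le_two
  rw [omg_pow_three, omg_sq, omg_eq, normSq_apply]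
  simp only [add_re, add_im, mul_re, mul_im, intCast_re, intCast_im, ofReal_re, ofReal_im,
    one_re, one_im, I_re, I_im]
  push_cast
  linear_combination ((b : ℝ) ^ 2 + (d : ℝ) ^ 2) / 2 * hsqrt

lemma int_add_int_mul_sqrt_two_eq_int {p q m : ℤ} (h : (p : ℝ) + q * Real.sqrt 2 = m) :
    p = m ∧ q = 0 := by
  have hq : q = 0 := by
    by_contra hq
    exact ((irrational_sqrt_two.intCast_mul hq).intCast_add p).ne_int m h
  subst hq
  exact ⟨by exact_mod_cast (by simpa using h), rfl⟩

lemma sum_sq_eq_two_pow_of_normSq {a b c d : ℤ} {n : ℕ}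
    (h : normSq (a + b * omg + c * omg ^ 2 + d * omg ^ 3) = 2 ^ n) :
    a ^ 2 + b ^ 2 + c ^ 2 + d ^ 2 = 2 ^ n ∧ a * b + b * c + c * d - d * a = 0 := by
  rw [normSq_zomega] at h
  exact int_add_int_mul_sqrt_two_eq_int (m := 2 ^ n) (by exact_mod_cast h)

lemma exists_omg_pow_eq_of_sq_eq_one {x : ℤ} (hx : x ^ 2 = 1) (j : ℕ) :
    ∃ k : ℕ, (x : ℂ) * omg ^ j = omg ^ k := by
  rcases sq_eq_one_iff.mp hx with rfl | rfl
  · exact ⟨j, by simp⟩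
  · exact ⟨j + 4, by rw [pow_add, omg_pow_four]; push_cast; ring⟩

lemma exists_omg_pow_of_sum_sq_eq_one {a b c d : ℤ} (h : a ^ 2 + b ^ 2 + c ^ 2 + d ^ 2 = 1) :
    ∃ k : ℕ, (a : ℂ) + b * omg + c * omg ^ 2 + d * omg ^ 3 = omg ^ k := by
  have := sq_nonneg a; have := sq_nonneg b; have := sq_nonneg c; have := sq_nonneg d
  have hcases : a ^ 2 = 1 ∧ b ^ 2 = 0 ∧ c ^ 2 = 0 ∧ d ^ 2 = 0 ∨
      a ^ 2 = 0 ∧ b ^ 2 = 1 ∧ c ^ 2 = 0 ∧ d ^ 2 = 0 ∨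
      a ^ 2 = 0 ∧ b ^ 2 = 0 ∧ c ^ 2 = 1 ∧ d ^ 2 = 0 ∨
      a ^ 2 = 0 ∧ b ^ 2 = 0 ∧ c ^ 2 = 0 ∧ d ^ 2 = 1 := by
    omega
  simp only [sq_eq_zero_iff] at hcases
  rcases hcases with ⟨ha, rfl, rfl, rfl⟩ | ⟨rfl, hb, rfl, rfl⟩ | ⟨rfl, rfl, hc, rfl⟩ |
      ⟨rfl, rfl, rfl, hd⟩
  · simpa using exists_omg_pow_eq_of_sq_eq_one ha 0
  · simpa using exists_omg_pow_eq_of_sq_eq_one hb 1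
  · simpa using exists_omg_pow_eq_of_sq_eq_one hc 2
  · simpa using exists_omg_pow_eq_of_sq_eq_one hd 3

lemma rt2_zdvd_of_even {a b c d : ℤ} (hsq : Even (a ^ 2 + b ^ 2 + c ^ 2 + d ^ 2))
    (hcross : a * b + b * c + c * d - d * a = 0) :
    ZDvd rt2 (a + b * omg + c * omg ^ 2 + d * omg ^ 3) := by
  have hprod : (a + c) * (b + d) = 2 * (a * d) := by linear_combination hcross
  have hsum : Even ((a + c) + (b + d)) := by
    rw [show a + c + (b + d) = a + b + c + d by ring]
    simpa [parity_simps] using hsq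
  have heven : Even (a + c) ∧ Even (b + d) := by
    rcases Int.even_mul.mp (hprod ▸ even_two_mul (a * d)) with h | h
    · exact ⟨h, (Int.even_add.mp hsum).mp h⟩
    · exact ⟨(Int.even_add.mp hsum).mpr h, h⟩
  obtain ⟨⟨s, hs⟩, ⟨t, ht⟩⟩ := heven
  obtain rfl : c = s + s - a := by omega
  obtain rfl : d = t + t - b := by omega
  refine ⟨(b - t : ℤ) + s * omg + t * omg ^ 2 + (s - a : ℤ) * omg ^ 3,
    ⟨b - t, s, t, s - a, rfl⟩, ?_⟩
  rw [rt2_eq_omg_sub_omg_pow_three]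
  push_cast
  linear_combination ((a : ℂ) + t * omg + (s - a) * omg ^ 2) * omg_pow_four

lemma eq_rt2_pow_mul_omg_pow_of_normSq {u : ℂ} (hu : Zomega u) {n : ℕ}
    (hn : normSq u = 2 ^ n) : ∃ k : ℕ, u = rt2 ^ n * omg ^ k := by
  induction n generalizing u with
  | zero =>
    obtain ⟨a, b, c, d, rfl⟩ := hu
    simpa using exists_omg_pow_of_sum_sq_eq_one (sum_sq_eq_two_pow_of_normSq hn).1
  | succ n ih =>
    obtain ⟨a, b, c, d, rfl⟩ := hu
    obtain ⟨hsq, hcross⟩ := sum_sq_eq_two_pow_of_normSq hn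
    have heven : Even (a ^ 2 + b ^ 2 + c ^ 2 + d ^ 2) :=
      hsq ▸ (Int.even_pow' n.succ_ne_zero).mpr even_two
    obtain ⟨v, hv, hv_eq⟩ := rt2_zdvd_of_even heven hcross
    have hnv : normSq v = 2 ^ n := by
      rw [hv_eq, normSq_mul, normSq_rt2, pow_succ] at hn
      linarith
    obtain ⟨k, rfl⟩ := ih hv hnv
    exact ⟨k, by rw [hv_eq, pow_succ]; ring⟩

/-- The only elements of Z[1/√2, i] with absolute value 1 are the powers of ω. -/
theorem stmt0 (z : ℂ) (hz : ZRoot2i z) (habs : ‖z‖ = 1) :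
    ∃ k : ℤ, z = omg ^ k := by
  obtain ⟨u, hu, n, rfl⟩ := hz
  have hrt2n : rt2 ^ n ≠ 0 := pow_ne_zero n rt2_ne_zero
  have hnormSq : normSq u = 2 ^ n := by
    have h := congrArg (· ^ 2) habs
    simp only [Complex.sq_norm, map_div₀, map_pow, normSq_rt2, one_pow] at h
    exact (div_eq_one_iff_eq (pow_ne_zero n two_ne_zero)).mp h
  obtain ⟨k, rfl⟩ := eq_rt2_pow_mul_omg_pow_of_normSq hu hnormSq
  exact ⟨k, by rw [zpow_natCast, mul_div_cancel_left₀ _ hrt2n]⟩
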